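/- Correctness of the multiplicative-weights iteration for leverage score overestimates (exact-arithmetic version): Let H = (V, E, w) be a connected weighted hypergraph with |V| = n, rank r ≥ 2, and w_e > 0 for all e. For each e ∈ E fix a_e ∈ e and let S_e = {f ∈ C(e,2) : a_e ∈ f}; let F = {(e,f) : f ∈ S_e, e ∈ E}. For weights c ∈ ℝ^F_{>0}, let L(c) be the Laplacian of the multigraph (V, F, c) and R_f(c) = (δ_i − δ_j)ᵀ L(c)⁺ (δ_i − δ_j) for f = {i,j}. Define c^{(1)}_{e,f} = w_e/(|e|−1) for all (e,f) ∈ F, and for t ≥ 1 define c^{(t+1)}_{e,f} = w_e · c^{(t)}_{e,f} R_f(c^{(t)}) / (Σ_{g∈S_e} c^{(t)}_{e,g} R_g(c^{(t)})). Then: (a) the iteration is well defined, with 0 < c^{(t)}_{e,f} ≤ w_e for all t and all (e,f) ∈ F; and (b) for every integer T ≥ 1, setting c̄ = (1/T)Σ_{t=1}^T c^{(t)} and z_e = 2·r^{1/T}·(1/T)·Σ_{t=1}^T Σ_{g∈S_e} c^{(t)}_{e,g} R_g(c^{(t)}), one has Σ_{e∈E} z_e ≤ 2·r^{1/T}·n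 and z_e ≥ w_e · max_{{u,v}⊆e} R_{uv}(c̄) for every e ∈ E, where R_{uv}(c̄) = (δ_u − δ_v)ᵀ L(c̄)⁺ (δ_u − δ_v). -/

import Mathlib

open Matrix BigOperators

/-- The vector `δ_i - δ_j` in `ℝ^n`. -/
noncomputable def dvec {n : ℕ} (i j : Fin n) : Fin n → ℝ :=
  fun k => (if k = i then (1 : ℝ) else 0) - (if k = j then (1 : ℝ) else 0)

/-- The rank-one matrix `(δ_i - δ_j)(δ_i - δ_j)ᵀ`, as a function of the unordered pair `{i,j}`. -/
noncomputable def edgeMat {n : ℕ} : Sym2 (Fin n) → Matrix (Fin n) (Fin n) ℝ :=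
  Sym2.lift ⟨fun i j => Matrix.vecMulVec (dvec i j) (dvec i j), by
    intro i j
    ext a b
    simp [Matrix.vecMulVec_apply, dvec]
    ring⟩

/-- `M` is the Moore–Penrose pseudoinverse of `L` (the four Penrose equations). -/
def IsMP {n : ℕ} (L M : Matrix (Fin n) (Fin n) ℝ) : Prop :=
  L * M * L = L ∧ M * L * M = M ∧ (L * M)ᵀ = L * M ∧ (M * L)ᵀ = M * L

/-- The Moore–Penrose pseudoinverse (chosen via the Penrose equations, which determine
it uniquely whenever it exists). -/
noncomputable def pinv {n : ℕ} (L : Matrix (Fin n) (Fin n) ℝ) : Matrix (Fin n) (Fin n) ℝ :=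
  haveI := Classical.propDecidable (∃ M, IsMP L M)
  if h : ∃ M, IsMP L M then h.choose else 0

/-- Effective resistance `(δ_i - δ_j)ᵀ L⁺ (δ_i - δ_j)` of an unordered pair, given `L⁺`. -/
noncomputable def res {n : ℕ} (Lp : Matrix (Fin n) (Fin n) ℝ) : Sym2 (Fin n) → ℝ :=
  Sym2.lift ⟨fun i j => dvec i j ⬝ᵥ (Lp *ᵥ dvec i j), by
    intro i j
    show dvec i j ⬝ᵥ (Lp *ᵥ dvec i j) = dvec j i ⬝ᵥ (Lp *ᵥ dvec j i)
    have h : dvec j i = -(dvec i j) := by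
      funext k; simp [dvec, Pi.neg_apply]
    rw [h]
    simp [Matrix.mulVec_neg]⟩

/-- Laplacian of the weighted graph with edge set `F` and weights `c`. -/
noncomputable def lapG {n : ℕ} (F : Finset (Sym2 (Fin n))) (c : Sym2 (Fin n) → ℝ) :
    Matrix (Fin n) (Fin n) ℝ :=
  ∑ f ∈ F, c f • edgeMat f

/-- The unordered pairs of distinct vertices contained in `e`. -/
def pairs {n : ℕ} (e : Finset (Fin n)) : Finset (Sym2 (Fin n)) :=
  e.sym2.filter fun f => ¬ f.IsDiag

/-- `Q_e(x) = max_{{i,j} ⊆ e} (x_i - x_j)²`. -/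
noncomputable def Qe {n : ℕ} (x : Fin n → ℝ) (e : Finset (Fin n)) : ℝ :=
  ⨆ i ∈ e, ⨆ j ∈ e, (x i - x j) ^ 2

/-- The hypergraph energy `Q_H(x) = Σ_e w_e Q_e(x)`. -/
noncomputable def QH {n : ℕ} (E : Finset (Finset (Fin n))) (w : Finset (Fin n) → ℝ)
    (x : Fin n → ℝ) : ℝ :=
  ∑ e ∈ E, w e * Qe x e

/-- Laplacian of the underlying (multi)graph of a hypergraph with weights `c e f`. -/
noncomputable def lapU {n : ℕ} (E : Finset (Finset (Fin n)))
    (c : Finset (Fin n) → Sym2 (Fin n) → ℝ) : Matrix (Fin n) (Fin n) ℝ :=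
  ∑ e ∈ E, ∑ f ∈ pairs e, c e f • edgeMat f

/-- The star `S_e = {f ∈ C(e,2) : a_e ∈ f}` of pairs in `e` through the fixed vertex `a e`. -/
noncomputable def star2 {n : ℕ} (a : Finset (Fin n) → Fin n) (e : Finset (Fin n)) :
    Finset (Sym2 (Fin n)) :=
  (pairs e).filter (fun f => a e ∈ f)

/-- Laplacian of the sparse underlying multigraph with edge set
`F = {(e,f) : f ∈ S_e, e ∈ E}` and weights `c e f`. -/
noncomputable def lapS {n : ℕ} (a : Finset (Fin n) → Fin n) (E : Finset (Finset (Fin n)))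
    (c : Finset (Fin n) → Sym2 (Fin n) → ℝ) : Matrix (Fin n) (Fin n) ℝ :=
  ∑ e ∈ E, ∑ f ∈ star2 a e, c e f • edgeMat f

/-- The overestimate value
`z_e = 2·r^{1/T}·(1/T)·Σ_{t=1}^T Σ_{g∈S_e} c^{(t)}_{e,g} R_g(c^{(t)})`. -/
noncomputable def zval {n : ℕ} (a : Finset (Fin n) → Fin n) (E : Finset (Finset (Fin n)))
    (c : ℕ → Finset (Fin n) → Sym2 (Fin n) → ℝ) (r T : ℕ) (e : Finset (Fin n)) : ℝ :=
  2 * (r : ℝ) ^ ((1 : ℝ) / (T : ℝ)) * ((1 : ℝ) / (T : ℝ)) *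
    ∑ t ∈ Finset.Icc 1 T, ∑ g ∈ star2 a e, c t e g * res (pinv (lapS a E (c t))) g

-- ================== auxiliary ==================
namespace LO
variable {n : ℕ}

/-- squared difference as a function on unordered pairs -/
noncomputable def qsym (x : Fin n → ℝ) : Sym2 (Fin n) → ℝ :=
  Sym2.lift ⟨fun i j => (x i - x j)^2, by intro i j; ring⟩

@[simp] lemma qsym_mk (x : Fin n → ℝ) (i j : Fin n) : qsym x s(i,j) = (x i - x j)^2 := rfl

@[simp] lemma res_mk (Lp : Matrix (Fin n) (Fin n) ℝ) (i j : Fin n) :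
    res Lp s(i,j) = dvec i j ⬝ᵥ (Lp *ᵥ dvec i j) := rfl

@[simp] lemma edgeMat_mk (i j : Fin n) :
    edgeMat s(i,j) = Matrix.vecMulVec (dvec i j) (dvec i j) := rfl

lemma qsym_nonneg (x : Fin n → ℝ) (f : Sym2 (Fin n)) : 0 ≤ qsym x f := by
  induction f using Sym2.inductionOn with
  | hf i j => simp [qsym_mk]; positivity

lemma dvec_dot (i j : Fin n) (x : Fin n → ℝ) : dvec i j ⬝ᵥ x = x i - x j := by
  simp [dvec, dotProduct, sub_mul, Finset.sum_sub_distrib, ite_mul]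

lemma dot_dvec (i j : Fin n) (x : Fin n → ℝ) : x ⬝ᵥ dvec i j = x i - x j := by
  simp [dvec, dotProduct, mul_sub, Finset.sum_sub_distrib, mul_ite]

lemma edgeMat_mulVec (i j : Fin n) (x : Fin n → ℝ) :
    edgeMat s(i,j) *ᵥ x = (x i - x j) • dvec i j := by
  ext k
  simp [Matrix.mulVec, Matrix.vecMulVec_apply, dotProduct, Finset.mul_sum]
  rw [show ∀ kk, (∑ m, dvec i j kk * dvec i j m * x m) = dvec i j kk * (dvec i j ⬝ᵥ x) from ?_]
  · rw [dvec_dot]; ring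
  · intro kk; rw [dotProduct, Finset.mul_sum]; congr 1; ext m; ring

lemma edgeMat_qf (i j : Fin n) (x : Fin n → ℝ) :
    x ⬝ᵥ (edgeMat s(i,j) *ᵥ x) = (x i - x j)^2 := by
  rw [edgeMat_mulVec, dotProduct_smul, dot_dvec]
  simp [smul_eq_mul]; ring

lemma edgeMat_transpose (f : Sym2 (Fin n)) : (edgeMat f)ᵀ = edgeMat f := by
  induction f using Sym2.inductionOn with
  | hf i j => ext a b; simp [Matrix.vecMulVec_apply]; ring

lemma edgeMat_mulVec_const (f : Sym2 (Fin n)) (r : ℝ) :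
    edgeMat f *ᵥ (fun _ => r) = 0 := by
  induction f using Sym2.inductionOn with
  | hf i j =>
    rw [edgeMat_mulVec]
    simp

end LO

namespace LO
variable {n : ℕ}

lemma mem_pairs {e : Finset (Fin n)} {i j : Fin n} :
    s(i,j) ∈ pairs e ↔ i ∈ e ∧ j ∈ e ∧ i ≠ j := by
  simp [pairs, Finset.mem_filter, Finset.mk_mem_sym2_iff, Sym2.mk_isDiag_iff, and_assoc]

lemma mem_star2 {a : Finset (Fin n) → Fin n} {e : Finset (Fin n)} {f : Sym2 (Fin n)} :
    f ∈ star2 a e ↔ f ∈ pairs e ∧ a e ∈ f := Finset.mem_filter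

/-- every star edge has the form s(a e, j) with j ∈ e, j ≠ a e -/
lemma star2_rep {a : Finset (Fin n) → Fin n} {e : Finset (Fin n)} {f : Sym2 (Fin n)}
    (hf : f ∈ star2 a e) : ∃ j, j ∈ e ∧ j ≠ a e ∧ f = s(a e, j) := by
  induction f using Sym2.inductionOn with
  | hf i j =>
    rw [mem_star2, mem_pairs] at hf
    obtain ⟨⟨hi, hj, hij⟩, hmem⟩ := hf
    rw [Sym2.mem_iff] at hmem
    rcases hmem with h | h
    · refine ⟨j, hj, ?_, by rw [← h]⟩
      rw [← h] at hij; exact hij.symm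
    · refine ⟨i, hi, ?_, by rw [← h, Sym2.eq_swap]⟩
      rw [← h] at hij; exact hij

lemma star2_mem_mk {a : Finset (Fin n) → Fin n} {e : Finset (Fin n)}
    (hae : a e ∈ e) {j : Fin n} (hj : j ∈ e) (hne : j ≠ a e) :
    s(a e, j) ∈ star2 a e := by
  rw [mem_star2, mem_pairs]
  exact ⟨⟨hae, hj, fun h => hne h.symm⟩, Sym2.mem_mk_left _ _⟩

lemma star2_nonempty {a : Finset (Fin n) → Fin n} {e : Finset (Fin n)}
    (hae : a e ∈ e) (hcard : 2 ≤ e.card) : (star2 a e).Nonempty := by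
  obtain ⟨j, hj, hne⟩ : ∃ j ∈ e, j ≠ a e := by
    by_contra h
    push_neg at h
    have : e ⊆ {a e} := fun x hx => Finset.mem_singleton.2 (h x hx)
    have := Finset.card_le_card this
    simp at this
    omega
  exact ⟨_, star2_mem_mk hae hj hne⟩

lemma sum_mulVec' {ι : Type*} (s : Finset ι) (A : ι → Matrix (Fin n) (Fin n) ℝ)
    (x : Fin n → ℝ) : (∑ i ∈ s, A i) *ᵥ x = ∑ i ∈ s, A i *ᵥ x := by
  ext k
  simp only [Matrix.mulVec, dotProduct, Finset.sum_apply, Finset.sum_mul,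
    Finset.sum_comm (s := s), Matrix.sum_apply]

lemma dot_sum' {ι : Type*} (s : Finset ι) (v : ι → (Fin n → ℝ)) (x : Fin n → ℝ) :
    x ⬝ᵥ (∑ i ∈ s, v i) = ∑ i ∈ s, x ⬝ᵥ v i := by
  simp only [dotProduct, Finset.sum_apply, Finset.mul_sum]
  rw [Finset.sum_comm]

lemma lapS_transpose (a : Finset (Fin n) → Fin n) (E : Finset (Finset (Fin n)))
    (κ : Finset (Fin n) → Sym2 (Fin n) → ℝ) : (lapS a E κ)ᵀ = lapS a E κ := by
  unfold lapS
  rw [Matrix.transpose_sum]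
  refine Finset.sum_congr rfl fun e _ => ?_
  rw [Matrix.transpose_sum]
  refine Finset.sum_congr rfl fun f _ => ?_
  rw [Matrix.transpose_smul, edgeMat_transpose]

lemma lapS_mulVec (a : Finset (Fin n) → Fin n) (E : Finset (Finset (Fin n)))
    (κ : Finset (Fin n) → Sym2 (Fin n) → ℝ) (x : Fin n → ℝ) :
    lapS a E κ *ᵥ x = ∑ e ∈ E, ∑ f ∈ star2 a e, κ e f • (edgeMat f *ᵥ x) := by
  unfold lapS
  rw [sum_mulVec']
  refine Finset.sum_congr rfl fun e _ => ?_
  rw [sum_mulVec']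
  refine Finset.sum_congr rfl fun f _ => ?_
  rw [Matrix.smul_mulVec]

lemma lapS_qf (a : Finset (Fin n) → Fin n) (E : Finset (Finset (Fin n)))
    (κ : Finset (Fin n) → Sym2 (Fin n) → ℝ) (x : Fin n → ℝ) :
    x ⬝ᵥ (lapS a E κ *ᵥ x) = ∑ e ∈ E, ∑ f ∈ star2 a e, κ e f * qsym x f := by
  rw [lapS_mulVec, dot_sum']
  refine Finset.sum_congr rfl fun e _ => ?_
  rw [dot_sum']
  refine Finset.sum_congr rfl fun f _ => ?_
  rw [dotProduct_smul]
  induction f using Sym2.inductionOn with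
  | hf i j => rw [edgeMat_qf]; simp [qsym_mk]

lemma lapS_bilin_symm (a : Finset (Fin n) → Fin n) (E : Finset (Finset (Fin n)))
    (κ : Finset (Fin n) → Sym2 (Fin n) → ℝ) (x y : Fin n → ℝ) :
    x ⬝ᵥ (lapS a E κ *ᵥ y) = y ⬝ᵥ (lapS a E κ *ᵥ x) := by
  rw [Matrix.dotProduct_mulVec, ← Matrix.mulVec_transpose, lapS_transpose,
    dotProduct_comm]

lemma lapS_mulVec_const (a : Finset (Fin n) → Fin n) (E : Finset (Finset (Fin n)))
    (κ : Finset (Fin n) → Sym2 (Fin n) → ℝ) (r : ℝ) :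
    lapS a E κ *ᵥ (fun _ => r) = 0 := by
  rw [lapS_mulVec]
  refine Finset.sum_eq_zero fun e _ => Finset.sum_eq_zero fun f _ => ?_
  rw [edgeMat_mulVec_const]
  simp

end LO

namespace LO
variable {n : ℕ}

/-- positivity of weights on all stars -/
def GoodW (E : Finset (Finset (Fin n))) (a : Finset (Fin n) → Fin n)
    (κ : Finset (Fin n) → Sym2 (Fin n) → ℝ) : Prop :=
  ∀ e ∈ E, ∀ f ∈ star2 a e, 0 < κ e f

section Conn
variable {E : Finset (Finset (Fin n))} {a : Finset (Fin n) → Fin n}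
  (hconn : (SimpleGraph.fromRel (fun u v : Fin n => ∃ e ∈ E, u ∈ e ∧ v ∈ e)).Connected)
  (ha : ∀ e ∈ E, a e ∈ e)
  {κ : Finset (Fin n) → Sym2 (Fin n) → ℝ} (hκ : GoodW E a κ)

include hκ in
lemma qf_terms_zero {x : Fin n → ℝ} (hx : x ⬝ᵥ (lapS a E κ *ᵥ x) = 0) :
    ∀ e ∈ E, ∀ f ∈ star2 a e, qsym x f = 0 := by
  rw [lapS_qf] at hx
  have h1 : ∀ e ∈ E, ∑ f ∈ star2 a e, κ e f * qsym x f = 0 := by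
    rw [Finset.sum_eq_zero_iff_of_nonneg] at hx
    · exact hx
    · exact fun e he => Finset.sum_nonneg fun f hf =>
        mul_nonneg (hκ e he f hf).le (qsym_nonneg x f)
  intro e he f hf
  have h2 := (Finset.sum_eq_zero_iff_of_nonneg
    (fun f hf => mul_nonneg (hκ e he f hf).le (qsym_nonneg x f))).1 (h1 e he) f hf
  have := hκ e he f hf
  nlinarith [qsym_nonneg x f]

lemma qsym_zero_iff {x : Fin n → ℝ} {i j : Fin n} :
    qsym x s(i,j) = 0 ↔ x i = x j := by
  rw [qsym_mk, pow_eq_zero_iff (by norm_num), sub_eq_zero]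

include hconn ha hκ in
lemma const_of_qf_zero {x : Fin n → ℝ} (hx : x ⬝ᵥ (lapS a E κ *ᵥ x) = 0) :
    ∀ u v : Fin n, x u = x v := by
  have hterm := qf_terms_zero hκ hx
  have hstar : ∀ e ∈ E, ∀ u ∈ e, x u = x (a e) := by
    intro e he u hu
    by_cases h : u = a e
    · rw [h]
    · have hf := star2_mem_mk (ha e he) hu h
      have := (qsym_zero_iff (x := x)).1 (hterm e he _ hf)
      exact this.symm -- x u = x (a e): qsym s(a e, u) gives x (a e) = x u
  have hadj : ∀ u v : Fin n,
      (SimpleGraph.fromRel (fun u v : Fin n => ∃ e ∈ E, u ∈ e ∧ v ∈ e)).Adj u v →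
      x u = x v := by
    intro u v huv
    rw [SimpleGraph.fromRel_adj] at huv
    obtain ⟨-, h | h⟩ := huv <;> obtain ⟨e, he, h1, h2⟩ := h
    · rw [hstar e he u h1, hstar e he v h2]
    · rw [hstar e he u h2, hstar e he v h1]
  intro u v
  obtain ⟨p⟩ := hconn.preconnected u v
  induction p with
  | nil => rfl
  | cons h p ih => exact (hadj _ _ h).trans ih

end Conn
end LO

namespace LO
variable {n : ℕ}

lemma isMP_unique {L M₁ M₂ : Matrix (Fin n) (Fin n) ℝ}
    (h1 : IsMP L M₁) (h2 : IsMP L M₂) : M₁ = M₂ := by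
  obtain ⟨a1, b1, c1, d1⟩ := h1
  obtain ⟨a2, b2, c2, d2⟩ := h2
  have e1 : L * M₁ = L * M₂ := by
    have h : L * M₁ = (L * M₁) * (L * M₂) := by
      calc L * M₁ = (L * M₁)ᵀ := c1.symm
      _ = (L * M₂ * L * M₁)ᵀ := by rw [a2]
      _ = ((L * M₂) * (L * M₁))ᵀ := by simp only [Matrix.mul_assoc]
      _ = (L * M₁)ᵀ * (L * M₂)ᵀ := by rw [Matrix.transpose_mul]
      _ = (L * M₁) * (L * M₂) := by rw [c1, c2]
    rw [h, show (L * M₁) * (L * M₂) = (L * M₁ * L) * M₂ by simp only [Matrix.mul_assoc], a1]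
  have e2 : M₁ * L = M₂ * L := by
    have h : M₁ * L = (M₂ * L) * (M₁ * L) := by
      calc M₁ * L = (M₁ * L)ᵀ := d1.symm
      _ = (M₁ * (L * M₂ * L))ᵀ := by rw [a2]
      _ = ((M₁ * L) * (M₂ * L))ᵀ := by simp only [Matrix.mul_assoc]
      _ = (M₂ * L)ᵀ * (M₁ * L)ᵀ := by rw [Matrix.transpose_mul]
      _ = (M₂ * L) * (M₁ * L) := by rw [d1, d2]
    rw [h, show (M₂ * L) * (M₁ * L) = M₂ * (L * M₁ * L) by simp only [Matrix.mul_assoc], a1]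
  calc M₁ = M₁ * L * M₁ := b1.symm
  _ = M₂ * L * M₁ := by rw [e2]
  _ = M₂ * (L * M₁) := Matrix.mul_assoc _ _ _
  _ = M₂ * (L * M₂) := by rw [e1]
  _ = M₂ := by rw [← Matrix.mul_assoc, b2]

lemma pinv_eq {L M : Matrix (Fin n) (Fin n) ℝ} (h : IsMP L M) : pinv L = M := by
  unfold pinv
  split
  · exact isMP_unique (Exists.choose_spec ‹∃ M, IsMP L M›) h
  · exact absurd ⟨M, h⟩ ‹¬∃ M, IsMP L M›

noncomputable def Jmat (n : ℕ) : Matrix (Fin n) (Fin n) ℝ := Matrix.of fun _ _ => 1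

lemma Jmat_transpose : (Jmat n)ᵀ = Jmat n := by ext i j; rfl

lemma Jmat_mul_Jmat : Jmat n * Jmat n = (n : ℝ) • Jmat n := by
  ext i j; simp [Jmat, Matrix.mul_apply]

lemma Jmat_mulVec (x : Fin n → ℝ) : Jmat n *ᵥ x = fun _ => ∑ k, x k := by
  ext i; simp [Jmat, Matrix.mulVec, dotProduct]

section L
variable (a : Finset (Fin n) → Fin n) (E : Finset (Finset (Fin n)))
  (κ : Finset (Fin n) → Sym2 (Fin n) → ℝ)

lemma lapS_mul_Jmat : lapS a E κ * Jmat n = 0 := by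
  ext i j
  have := congrFun (lapS_mulVec_const a E κ 1) i
  simp only [Matrix.mulVec, dotProduct, Pi.zero_apply, mul_one] at this
  simp [Matrix.mul_apply, Jmat, this]

lemma Jmat_mul_lapS : Jmat n * lapS a E κ = 0 := by
  have : (Jmat n * lapS a E κ)ᵀ = 0 := by
    rw [Matrix.transpose_mul, lapS_transpose, Jmat_transpose, lapS_mul_Jmat]
  calc Jmat n * lapS a E κ = ((Jmat n * lapS a E κ)ᵀ)ᵀ := (Matrix.transpose_transpose _).symm
  _ = 0 := by rw [this]; simp

end L
end LO

namespace LO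
variable {n : ℕ}

noncomputable def Kmat (a : Finset (Fin n) → Fin n) (E : Finset (Finset (Fin n)))
    (κ : Finset (Fin n) → Sym2 (Fin n) → ℝ) : Matrix (Fin n) (Fin n) ℝ :=
  lapS a E κ + ((n : ℝ))⁻¹ • Jmat n

noncomputable def Mmat (a : Finset (Fin n) → Fin n) (E : Finset (Finset (Fin n)))
    (κ : Finset (Fin n) → Sym2 (Fin n) → ℝ) : Matrix (Fin n) (Fin n) ℝ :=
  (Kmat a E κ)⁻¹ - ((n : ℝ))⁻¹ • Jmat n

section Good
variable {E : Finset (Finset (Fin n))} {a : Finset (Fin n) → Fin n}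
  (hconn : (SimpleGraph.fromRel (fun u v : Fin n => ∃ e ∈ E, u ∈ e ∧ v ∈ e)).Connected)
  (ha : ∀ e ∈ E, a e ∈ e) (hn : 0 < n)
  {κ : Finset (Fin n) → Sym2 (Fin n) → ℝ} (hκ : GoodW E a κ)

include hκ in
lemma lapS_psd (x : Fin n → ℝ) : 0 ≤ x ⬝ᵥ (lapS a E κ *ᵥ x) := by
  rw [lapS_qf]
  exact Finset.sum_nonneg fun e he => Finset.sum_nonneg fun f hf =>
    mul_nonneg (hκ e he f hf).le (qsym_nonneg x f)

lemma Kmat_transpose : (Kmat a E κ)ᵀ = Kmat a E κ := by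
  unfold Kmat
  rw [Matrix.transpose_add, lapS_transpose, Matrix.transpose_smul, Jmat_transpose]

lemma dot_Jmat (x : Fin n → ℝ) : x ⬝ᵥ (Jmat n *ᵥ x) = (∑ k, x k)^2 := by
  rw [Jmat_mulVec, dotProduct, pow_two, ← Finset.sum_mul]

lemma Kmat_qf (x : Fin n → ℝ) :
    x ⬝ᵥ (Kmat a E κ *ᵥ x) = x ⬝ᵥ (lapS a E κ *ᵥ x) + (n : ℝ)⁻¹ * (∑ k, x k)^2 := by
  unfold Kmat
  rw [Matrix.add_mulVec, dotProduct_add, Matrix.smul_mulVec,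
    dotProduct_smul, dot_Jmat, smul_eq_mul]

include hconn ha hn hκ in
lemma Kmat_posdef : (Kmat a E κ).PosDef := by
  rw [Matrix.posDef_iff_dotProduct_mulVec]
  constructor
  · rw [Matrix.IsHermitian]
    have hsym := Kmat_transpose (a := a) (E := E) (κ := κ)
    ext i j
    have h2 := congrFun (congrFun hsym i) j
    rw [Matrix.transpose_apply] at h2
    rw [Matrix.conjTranspose_apply, star_trivial]
    exact h2
  · intro x hx
    have hst : star x = x := by funext k; simp
    rw [hst, Kmat_qf]
    have h1 := lapS_psd hκ x
    rcases lt_or_eq_of_le h1 with h | h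
    · have h2 : 0 ≤ (n:ℝ)⁻¹ * (∑ k, x k)^2 := by positivity
      linarith
    · have hconst := const_of_qf_zero hconn ha hκ h.symm
      obtain ⟨k0, hk0⟩ : ∃ k, x k ≠ 0 := by
        by_contra hc; push_neg at hc; exact hx (funext hc)
      have hxk : ∀ k, x k = x k0 := fun k => hconst k k0
      have hsum : ∑ k, x k = n * x k0 := by
        rw [Finset.sum_congr rfl (fun k _ => hxk k)]
        simp [mul_comm]
      rw [← h, hsum]
      have : (0:ℝ) < n := by exact_mod_cast hn
      positivity

include hconn ha hn hκ in
lemma Kmat_isUnit_det : IsUnit (Kmat a E κ).det :=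
  (Kmat_posdef hconn ha hn hκ).det_pos.ne'.isUnit

include hconn ha hn hκ in
lemma Kmat_mul_inv : Kmat a E κ * (Kmat a E κ)⁻¹ = 1 :=
  Matrix.mul_nonsing_inv _ (Kmat_isUnit_det hconn ha hn hκ)

include hconn ha hn hκ in
lemma Kmat_inv_mul : (Kmat a E κ)⁻¹ * Kmat a E κ = 1 :=
  Matrix.nonsing_inv_mul _ (Kmat_isUnit_det hconn ha hn hκ)

include hn in
lemma Jmat_mul_Kmat : Jmat n * Kmat a E κ = Jmat n := by
  unfold Kmat
  rw [Matrix.mul_add, Jmat_mul_lapS, Matrix.mul_smul, Jmat_mul_Jmat, zero_add,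
    smul_smul, inv_mul_cancel₀ (by exact_mod_cast hn.ne' : (n:ℝ) ≠ 0), one_smul]

include hn in
lemma Kmat_mul_Jmat : Kmat a E κ * Jmat n = Jmat n := by
  unfold Kmat
  rw [Matrix.add_mul, lapS_mul_Jmat, Matrix.smul_mul, Jmat_mul_Jmat, zero_add,
    smul_smul, inv_mul_cancel₀ (by exact_mod_cast hn.ne' : (n:ℝ) ≠ 0), one_smul]

include hconn ha hn hκ in
lemma Jmat_mul_Kinv : Jmat n * (Kmat a E κ)⁻¹ = Jmat n := by
  conv_lhs => rw [← Jmat_mul_Kmat (a := a) (E := E) (κ := κ) hn, Matrix.mul_assoc,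
    Kmat_mul_inv hconn ha hn hκ, Matrix.mul_one]

include hconn ha hn hκ in
lemma Kinv_mul_Jmat : (Kmat a E κ)⁻¹ * Jmat n = Jmat n := by
  conv_lhs => rw [← Kmat_mul_Jmat (a := a) (E := E) (κ := κ) hn, ← Matrix.mul_assoc,
    Kmat_inv_mul hconn ha hn hκ, Matrix.one_mul]

include hconn ha hn hκ in
lemma Jmat_mul_Mmat : Jmat n * Mmat a E κ = 0 := by
  unfold Mmat
  rw [Matrix.mul_sub, Jmat_mul_Kinv hconn ha hn hκ, Matrix.mul_smul, Jmat_mul_Jmat,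
    smul_smul, inv_mul_cancel₀ (by exact_mod_cast hn.ne' : (n:ℝ) ≠ 0), one_smul, sub_self]

include hconn ha hn hκ in
lemma Mmat_mul_Jmat : Mmat a E κ * Jmat n = 0 := by
  unfold Mmat
  rw [Matrix.sub_mul, Kinv_mul_Jmat hconn ha hn hκ, Matrix.smul_mul, Jmat_mul_Jmat,
    smul_smul, inv_mul_cancel₀ (by exact_mod_cast hn.ne' : (n:ℝ) ≠ 0), one_smul, sub_self]

lemma lapS_eq_K_sub : lapS a E κ = Kmat a E κ - ((n : ℝ))⁻¹ • Jmat n := by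
  unfold Kmat
  rw [add_sub_cancel_right]

lemma expand_prod (A B J' : Matrix (Fin n) (Fin n) ℝ) (cc : ℝ) :
    (A - cc • J') * (B - cc • J') =
      A * B - cc • (A * J') - cc • (J' * B) + (cc * cc) • (J' * J') := by
  simp only [Matrix.mul_sub, Matrix.sub_mul, Matrix.smul_mul, Matrix.mul_smul, smul_smul, smul_sub]
  abel

include hconn ha hn hκ in
lemma lapS_mul_Mmat : lapS a E κ * Mmat a E κ = 1 - ((n : ℝ))⁻¹ • Jmat n := by
  have hn' : (n:ℝ) ≠ 0 := by exact_mod_cast hn.ne'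
  conv_lhs => rw [lapS_eq_K_sub]
  unfold Mmat
  rw [expand_prod, Kmat_mul_inv hconn ha hn hκ,
    Kmat_mul_Jmat (a := a) (E := E) (κ := κ) hn,
    Jmat_mul_Kinv hconn ha hn hκ, Jmat_mul_Jmat, smul_smul,
    show (n:ℝ)⁻¹ * (n:ℝ)⁻¹ * (n:ℝ) = (n:ℝ)⁻¹ by
      rw [mul_assoc, inv_mul_cancel₀ hn', mul_one]]
  abel

include hconn ha hn hκ in
lemma Mmat_mul_lapS : Mmat a E κ * lapS a E κ = 1 - ((n : ℝ))⁻¹ • Jmat n := by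
  have hn' : (n:ℝ) ≠ 0 := by exact_mod_cast hn.ne'
  conv_lhs => rw [lapS_eq_K_sub]
  unfold Mmat
  rw [expand_prod, Kmat_inv_mul hconn ha hn hκ,
    Kinv_mul_Jmat hconn ha hn hκ,
    Jmat_mul_Kmat (a := a) (E := E) (κ := κ) hn, Jmat_mul_Jmat, smul_smul,
    show (n:ℝ)⁻¹ * (n:ℝ)⁻¹ * (n:ℝ) = (n:ℝ)⁻¹ by
      rw [mul_assoc, inv_mul_cancel₀ hn', mul_one]]
  abel

include hconn ha hn hκ in
lemma isMP_Mmat : IsMP (lapS a E κ) (Mmat a E κ) := by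
  have hLM := lapS_mul_Mmat hconn ha hn hκ
  have hML := Mmat_mul_lapS hconn ha hn hκ
  refine ⟨?_, ?_, ?_, ?_⟩
  · rw [hLM, Matrix.sub_mul, Matrix.one_mul, Matrix.smul_mul, Jmat_mul_lapS, smul_zero, sub_zero]
  · rw [Matrix.mul_assoc, hLM, Matrix.mul_sub, Matrix.mul_one, Matrix.mul_smul,
      Mmat_mul_Jmat hconn ha hn hκ, smul_zero, sub_zero]
  · rw [hLM, Matrix.transpose_sub, Matrix.transpose_one, Matrix.transpose_smul, Jmat_transpose]
  · rw [hML, Matrix.transpose_sub, Matrix.transpose_one, Matrix.transpose_smul, Jmat_transpose]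

include hconn ha hn hκ in
lemma pinv_lapS : pinv (lapS a E κ) = Mmat a E κ :=
  pinv_eq (isMP_Mmat hconn ha hn hκ)

end Good
end LO

namespace LO
variable {n : ℕ}
section Good
variable {E : Finset (Finset (Fin n))} {a : Finset (Fin n) → Fin n}
  (hconn : (SimpleGraph.fromRel (fun u v : Fin n => ∃ e ∈ E, u ∈ e ∧ v ∈ e)).Connected)
  (ha : ∀ e ∈ E, a e ∈ e) (hn : 0 < n)
  {κ : Finset (Fin n) → Sym2 (Fin n) → ℝ} (hκ : GoodW E a κ)

include hconn ha hn hκ in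
lemma pinv_transpose' : (pinv (lapS a E κ))ᵀ = pinv (lapS a E κ) := by
  rw [pinv_lapS hconn ha hn hκ]
  unfold Mmat
  rw [Matrix.transpose_sub, Matrix.transpose_nonsing_inv, Kmat_transpose,
    Matrix.transpose_smul, Jmat_transpose]

include hconn ha hn hκ in
lemma lap_mul_pinv : lapS a E κ * pinv (lapS a E κ) = 1 - ((n : ℝ))⁻¹ • Jmat n := by
  rw [pinv_lapS hconn ha hn hκ]; exact lapS_mul_Mmat hconn ha hn hκ

include hconn ha hn hκ in
lemma pinv_mul_lap : pinv (lapS a E κ) * lapS a E κ = 1 - ((n : ℝ))⁻¹ • Jmat n := by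
  rw [pinv_lapS hconn ha hn hκ]; exact Mmat_mul_lapS hconn ha hn hκ

include hconn ha hn hκ in
lemma isMP_pinv : IsMP (lapS a E κ) (pinv (lapS a E κ)) := by
  rw [pinv_lapS hconn ha hn hκ]; exact isMP_Mmat hconn ha hn hκ

lemma sum_dvec (i j : Fin n) : ∑ k, dvec i j k = 0 := by
  have h := dvec_dot i j (fun _ => (1:ℝ))
  simpa [dotProduct] using h

lemma proj_dvec (i j : Fin n) :
    (1 - ((n : ℝ))⁻¹ • Jmat n) *ᵥ dvec i j = dvec i j := by
  rw [Matrix.sub_mulVec, Matrix.one_mulVec, Matrix.smul_mulVec, Jmat_mulVec,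
    sum_dvec]
  funext k
  simp

include hconn ha hn hκ in
lemma lap_pinv_dvec (i j : Fin n) :
    lapS a E κ *ᵥ (pinv (lapS a E κ) *ᵥ dvec i j) = dvec i j := by
  rw [Matrix.mulVec_mulVec, lap_mul_pinv hconn ha hn hκ, proj_dvec]

include hconn ha hn hκ in
lemma dot_pinv_eq (x : Fin n → ℝ) :
    x ⬝ᵥ (pinv (lapS a E κ) *ᵥ x) =
      (pinv (lapS a E κ) *ᵥ x) ⬝ᵥ (lapS a E κ *ᵥ (pinv (lapS a E κ) *ᵥ x)) := by
  have hmp := isMP_pinv hconn ha hn hκ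
  have hsym := pinv_transpose' hconn ha hn hκ
  conv_lhs => rw [← hmp.2.1]
  rw [show pinv (lapS a E κ) * lapS a E κ * pinv (lapS a E κ)
      = pinv (lapS a E κ) * (lapS a E κ * pinv (lapS a E κ)) from Matrix.mul_assoc _ _ _]
  rw [← Matrix.mulVec_mulVec, Matrix.dotProduct_mulVec, ← Matrix.mulVec_transpose, hsym,
    Matrix.mulVec_mulVec]

include hconn ha hn hκ in
lemma pinv_psd (x : Fin n → ℝ) : 0 ≤ x ⬝ᵥ (pinv (lapS a E κ) *ᵥ x) := by
  rw [dot_pinv_eq hconn ha hn hκ]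
  exact lapS_psd hκ _

include hconn ha hn hκ in
lemma res_pos {i j : Fin n} (hij : i ≠ j) : 0 < res (pinv (lapS a E κ)) s(i,j) := by
  rw [res_mk]
  have heq := dot_pinv_eq hconn ha hn hκ (dvec i j)
  rw [heq]
  set y := pinv (lapS a E κ) *ᵥ dvec i j with hy
  rcases lt_or_eq_of_le (lapS_psd hκ y) with h | h
  · exact h
  · exfalso
    have hconst := const_of_qf_zero hconn ha hκ h.symm
    have hyconst : y = fun _ => y ⟨0, hn⟩ := funext fun k => hconst k _
    have hLy : lapS a E κ *ᵥ y = 0 := by rw [hyconst]; exact lapS_mulVec_const a E κ _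
    have hd : lapS a E κ *ᵥ y = dvec i j := lap_pinv_dvec hconn ha hn hκ i j
    have : dvec i j i = 0 := by rw [← hd, hLy]; rfl
    simp [dvec, hij] at this

include hconn ha hn hκ in
lemma res_nonneg' (f : Sym2 (Fin n)) : 0 ≤ res (pinv (lapS a E κ)) f := by
  induction f using Sym2.inductionOn with
  | hf i j => rw [res_mk]; exact pinv_psd hconn ha hn hκ _

include hκ in
lemma lapS_cs (x y : Fin n → ℝ) :
    (x ⬝ᵥ (lapS a E κ *ᵥ y))^2 ≤
      (x ⬝ᵥ (lapS a E κ *ᵥ x)) * (y ⬝ᵥ (lapS a E κ *ᵥ y)) := by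
  have key : ∀ t : ℝ, 0 ≤ (y ⬝ᵥ (lapS a E κ *ᵥ y)) * (t * t)
      + (2 * (x ⬝ᵥ (lapS a E κ *ᵥ y))) * t + (x ⬝ᵥ (lapS a E κ *ᵥ x)) := by
    intro t
    have h0 := lapS_psd hκ (x + t • y)
    have hb := lapS_bilin_symm a E κ x y
    simp only [Matrix.mulVec_add, Matrix.mulVec_smul, dotProduct_add,
      add_dotProduct, dotProduct_smul, smul_dotProduct,
      smul_eq_mul] at h0
    rw [← hb] at h0
    ring_nf at h0 ⊢
    linarith [h0]
  have hd := discrim_le_zero key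
  rw [discrim] at hd
  nlinarith [hd]

lemma trace_edgeMat_mul (i j : Fin n) (M : Matrix (Fin n) (Fin n) ℝ) :
    Matrix.trace (edgeMat s(i,j) * M) = dvec i j ⬝ᵥ (M *ᵥ dvec i j) := by
  simp only [Matrix.trace, Matrix.diag, edgeMat_mk, Matrix.mul_apply,
    Matrix.vecMulVec_apply, Matrix.mulVec, dotProduct, Finset.mul_sum]
  rw [Finset.sum_comm]
  refine Finset.sum_congr rfl fun m _ => Finset.sum_congr rfl fun k _ => by ring

lemma trace_res (M : Matrix (Fin n) (Fin n) ℝ) (f : Sym2 (Fin n)) :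
    Matrix.trace (edgeMat f * M) = res M f := by
  induction f using Sym2.inductionOn with
  | hf i j => rw [trace_edgeMat_mul, res_mk]

lemma trace_Jmat : Matrix.trace (Jmat n) = (n : ℝ) := by
  simp [Matrix.trace, Jmat, Matrix.diag]

include hconn ha hn hκ in
lemma foster : ∑ e ∈ E, ∑ f ∈ star2 a e, κ e f * res (pinv (lapS a E κ)) f
    = (n : ℝ) - 1 := by
  have hn' : (n:ℝ) ≠ 0 := by exact_mod_cast hn.ne'
  have h1 : Matrix.trace (lapS a E κ * pinv (lapS a E κ)) = (n:ℝ) - 1 := by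
    rw [lap_mul_pinv hconn ha hn hκ, Matrix.trace_sub, Matrix.trace_one,
      Matrix.trace_smul, trace_Jmat, smul_eq_mul, inv_mul_cancel₀ hn', Fintype.card_fin]
  rw [← h1]
  unfold lapS
  rw [Finset.sum_mul, Matrix.trace_sum]
  refine Finset.sum_congr rfl fun e _ => ?_
  rw [Finset.sum_mul, Matrix.trace_sum]
  refine Finset.sum_congr rfl fun f _ => ?_
  rw [Matrix.smul_mul, Matrix.trace_smul, trace_res, smul_eq_mul]

end Good
end LO

namespace LO
variable {n : ℕ}

lemma bilin_symm_of_transpose (M : Matrix (Fin n) (Fin n) ℝ) (hM : Mᵀ = M)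
    (x y : Fin n → ℝ) : x ⬝ᵥ (M *ᵥ y) = y ⬝ᵥ (M *ᵥ x) := by
  rw [Matrix.dotProduct_mulVec, ← Matrix.mulVec_transpose, hM, dotProduct_comm]

section Good
variable {E : Finset (Finset (Fin n))} {a : Finset (Fin n) → Fin n}
  (hconn : (SimpleGraph.fromRel (fun u v : Fin n => ∃ e ∈ E, u ∈ e ∧ v ∈ e)).Connected)
  (ha : ∀ e ∈ E, a e ∈ e) (hn : 0 < n)
  {κ : Finset (Fin n) → Sym2 (Fin n) → ℝ} (hκ : GoodW E a κ)

include ha hκ in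
/-- one-step propagation of the maximum along a star edge -/
lemma max_step {b v : Fin n} {y : Fin n → ℝ} {m : ℝ}
    (hy : lapS a E κ *ᵥ y = dvec b v)
    (hm : ∀ u, y u ≤ m) {k : Fin n} (hk : y k = m) (hkb : k ≠ b)
    {e : Finset (Fin n)} (he : e ∈ E) {j : Fin n} (hj : s(k,j) ∈ star2 a e) :
    y j = m := by
  have hterm : ∀ e' ∈ E, ∀ f ∈ star2 a e', 0 ≤ κ e' f * ((edgeMat f *ᵥ y) k) := by
    intro e' he' f hf
    obtain ⟨j', hj'e, hj'ne, rfl⟩ := star2_rep hf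
    rw [edgeMat_mulVec, Pi.smul_apply, smul_eq_mul]
    by_cases h1 : k = a e'
    · have hkj : k ≠ j' := by rw [h1]; exact fun hc => hj'ne hc.symm
      rw [show dvec (a e') j' k = 1 by simp [dvec, h1, hkj, hj'ne.symm]]
      have : y j' ≤ y (a e') := by rw [← h1, hk]; exact hm j'
      have hκ' := (hκ e' he' _ (star2_mem_mk (ha e' he') hj'e hj'ne)).le
      nlinarith
    · by_cases h2 : k = j'
      · rw [show dvec (a e') j' k = -1 by simp [dvec, h1, h2, hj'ne]]
        have : y (a e') ≤ y j' := by rw [← h2, hk]; exact hm (a e')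
        have hκ' := (hκ e' he' _ (star2_mem_mk (ha e' he') hj'e hj'ne)).le
        nlinarith
      · rw [show dvec (a e') j' k = 0 by simp [dvec, h1, h2]]
        simp
  have hsumeq : ∑ e' ∈ E, ∑ f ∈ star2 a e', κ e' f * ((edgeMat f *ᵥ y) k)
      = dvec b v k := by
    have h1 := congrFun hy k
    rw [lapS_mulVec] at h1
    rw [← h1, Finset.sum_apply]
    refine Finset.sum_congr rfl fun e' _ => ?_
    rw [Finset.sum_apply]
    refine Finset.sum_congr rfl fun f _ => ?_
    rw [Pi.smul_apply, smul_eq_mul]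
  have hle : dvec b v k ≤ 0 := by
    simp only [dvec, if_neg hkb, zero_sub, neg_nonpos]
    split_ifs <;> norm_num
  have hzero : ∀ e' ∈ E, ∀ f ∈ star2 a e', κ e' f * ((edgeMat f *ᵥ y) k) = 0 := by
    have hnn : ∀ e' ∈ E, 0 ≤ ∑ f ∈ star2 a e', κ e' f * ((edgeMat f *ᵥ y) k) :=
      fun e' he' => Finset.sum_nonneg fun f hf => hterm e' he' f hf
    have hz : ∑ e' ∈ E, ∑ f ∈ star2 a e', κ e' f * ((edgeMat f *ᵥ y) k) = 0 :=
      le_antisymm (hsumeq ▸ hle) (Finset.sum_nonneg hnn)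
    intro e' he' f hf
    have h3 := (Finset.sum_eq_zero_iff_of_nonneg hnn).1 hz e' he'
    exact (Finset.sum_eq_zero_iff_of_nonneg (fun f hf => hterm e' he' f hf)).1 h3 f hf
  have hkj : k ≠ j := by
    have := (mem_star2.1 hj).1
    rw [mem_pairs] at this
    exact this.2.2
  have h4 := hzero e he _ hj
  rw [edgeMat_mulVec, Pi.smul_apply, smul_eq_mul,
    show dvec k j k = 1 by simp [dvec, hkj]] at h4
  have h5 := hκ e he _ hj
  have : y k - y j = 0 := by
    rcases mul_eq_zero.1 h4 with h | h
    · exact absurd h h5.ne'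
    · linarith [h]
  rw [← hk]; linarith

include ha hκ in
/-- propagation across a hyperedge (via the star center) -/
lemma edge_step {b v : Fin n} {y : Fin n → ℝ} {m : ℝ}
    (hy : lapS a E κ *ᵥ y = dvec b v) (hm : ∀ u, y u ≤ m)
    {k : Fin n} (hk : y k = m) {e : Finset (Fin n)} (he : e ∈ E)
    (hke : k ∈ e) {k' : Fin n} (hk'e : k' ∈ e) :
    y b = m ∨ y k' = m := by
  by_cases hkb : k = b
  · exact Or.inl (hkb ▸ hk)
  by_cases hkk' : k' = k
  · exact Or.inr (hkk' ▸ hk)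
  have hae : y (a e) = m := by
    by_cases hkae : k = a e
    · rw [← hkae]; exact hk
    · refine max_step ha hκ hy hm hk hkb he ?_
      rw [Sym2.eq_swap]
      exact star2_mem_mk (ha e he) hke hkae
  by_cases haeb : a e = b
  · exact Or.inl (haeb ▸ hae)
  by_cases hk'ae : k' = a e
  · exact Or.inr (hk'ae ▸ hae)
  exact Or.inr (max_step ha hκ hy hm hae haeb he (star2_mem_mk (ha e he) hk'e hk'ae))

include hconn ha hn hκ in
/-- maximum principle: the potential of a unit `b→v` flow is maximal at `b` -/
lemma max_principle {b v : Fin n} (hbv : b ≠ v) (u : Fin n) :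
    (pinv (lapS a E κ) *ᵥ dvec b v) u ≤ (pinv (lapS a E κ) *ᵥ dvec b v) b := by
  set y := pinv (lapS a E κ) *ᵥ dvec b v with hydef
  have hy : lapS a E κ *ᵥ y = dvec b v := lap_pinv_dvec hconn ha hn hκ b v
  obtain ⟨k0, -, hk0⟩ := Finset.exists_max_image Finset.univ y ⟨b, Finset.mem_univ b⟩
  have hm : ∀ u, y u ≤ y k0 := fun u => hk0 u (Finset.mem_univ u)
  suffices hyb : y b = y k0 by rw [hyb]; exact hm u
  have key : ∀ (k k' : Fin n)
      (p : (SimpleGraph.fromRel (fun u v : Fin n => ∃ e ∈ E, u ∈ e ∧ v ∈ e)).Walk k k'),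
      y k = y k0 → y b = y k0 ∨ y k' = y k0 := by
    intro k k' p
    induction p with
    | nil => exact fun h => Or.inr h
    | @cons x1 x2 x3 hadj p ih =>
      intro hu
      rw [SimpleGraph.fromRel_adj] at hadj
      obtain ⟨-, hrel⟩ := hadj
      have hstep : y b = y k0 ∨ y x2 = y k0 := by
        rcases hrel with ⟨e, he, h1, h2⟩ | ⟨e, he, h1, h2⟩
        · exact edge_step ha hκ hy hm hu he h1 h2
        · exact edge_step ha hκ hy hm hu he h2 h1
      rcases hstep with h | h
      · exact Or.inl h
      · exact ih h
  obtain ⟨p⟩ := hconn.preconnected k0 b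
  rcases key k0 b p rfl with h | h
  · exact h
  · exact h

include hconn ha hn hκ in
/-- triangle inequality for effective resistances through a middle vertex `b` -/
lemma res_triangle {u v b : Fin n} (hub : u ≠ b) (hbv : b ≠ v) :
    res (pinv (lapS a E κ)) s(u,v) ≤
      res (pinv (lapS a E κ)) s(u,b) + res (pinv (lapS a E κ)) s(b,v) := by
  set M := pinv (lapS a E κ) with hM
  have hMt : Mᵀ = M := pinv_transpose' hconn ha hn hκ
  have hdecomp : dvec u v = dvec u b + dvec b v := by
    funext k; simp only [dvec, Pi.add_apply]; ring
  have hcross : dvec u b ⬝ᵥ (M *ᵥ dvec b v) ≤ 0 := by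
    rw [dvec_dot]
    have := max_principle hconn ha hn hκ hbv u
    linarith
  have hexp : res M s(u,v) = res M s(u,b) + res M s(b,v)
      + 2 * (dvec u b ⬝ᵥ (M *ᵥ dvec b v)) := by
    rw [res_mk, res_mk, res_mk, hdecomp, Matrix.mulVec_add, dotProduct_add,
      add_dotProduct, add_dotProduct]
    have hsymm : dvec b v ⬝ᵥ (M *ᵥ dvec u b) = dvec u b ⬝ᵥ (M *ᵥ dvec b v) :=
      bilin_symm_of_transpose M hMt _ _
    rw [hsymm]; ring
  linarith

end Good
end LO

namespace LO
variable {n : ℕ}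

section Good
variable {E : Finset (Finset (Fin n))} {a : Finset (Fin n) → Fin n}
  (hconn : (SimpleGraph.fromRel (fun u v : Fin n => ∃ e ∈ E, u ∈ e ∧ v ∈ e)).Connected)
  (ha : ∀ e ∈ E, a e ∈ e) (hn : 0 < n)
  {κ : Finset (Fin n) → Sym2 (Fin n) → ℝ} (hκ : GoodW E a κ)

include hconn ha hn hκ in
/-- for any potential `x`, `(x_i - x_j)² ≤ (xᵀLx)·R_{ij}` -/
lemma energy_lower (i j : Fin n) (x : Fin n → ℝ) :
    (dvec i j ⬝ᵥ x)^2 ≤ (x ⬝ᵥ (lapS a E κ *ᵥ x)) * res (pinv (lapS a E κ)) s(i,j) := by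
  set L := lapS a E κ
  set M := pinv L with hM
  set y := M *ᵥ dvec i j with hy
  have hLy : L *ᵥ y = dvec i j := lap_pinv_dvec hconn ha hn hκ i j
  have h1 : dvec i j ⬝ᵥ x = x ⬝ᵥ (L *ᵥ y) := by
    rw [hLy, dotProduct_comm]
  have h2 : y ⬝ᵥ (L *ᵥ y) = res M s(i,j) := by
    rw [hLy, dotProduct_comm, res_mk]
  have hcs := lapS_cs (a := a) (E := E) hκ x y
  rw [h1]
  calc (x ⬝ᵥ (L *ᵥ y))^2 ≤ (x ⬝ᵥ (L *ᵥ x)) * (y ⬝ᵥ (L *ᵥ y)) := hcs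
  _ = (x ⬝ᵥ (L *ᵥ x)) * res M s(i,j) := by rw [h2]

include hconn ha hn hκ in
lemma res_pos_star {e : Finset (Fin n)} (he : e ∈ E) {f : Sym2 (Fin n)}
    (hf : f ∈ star2 a e) : 0 < res (pinv (lapS a E κ)) f := by
  obtain ⟨j, hje, hjne, rfl⟩ := star2_rep hf
  exact res_pos hconn ha hn hκ (fun hc => hjne hc.symm)

end Good

/-- AM–GM: `(∏ x)^{1/T} ≤ (1/T) ∑ x` over `Icc 1 T` -/
lemma gm_le_am (T : ℕ) (hT : 1 ≤ T) (x : ℕ → ℝ)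
    (hx : ∀ t ∈ Finset.Icc 1 T, 0 ≤ x t) :
    (∏ t ∈ Finset.Icc 1 T, x t) ^ ((1:ℝ)/(T:ℝ)) ≤
      (1/(T:ℝ)) * ∑ t ∈ Finset.Icc 1 T, x t := by
  have hT' : (T:ℝ) ≠ 0 := by positivity
  have hcard : (Finset.Icc 1 T).card = T := by rw [Nat.card_Icc]; omega
  have h := Real.geom_mean_le_arith_mean_weighted (Finset.Icc 1 T)
    (fun _ => 1/(T:ℝ)) x (fun i _ => by positivity)
    (by rw [Finset.sum_const, hcard, nsmul_eq_mul]; field_simp) hx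
  calc (∏ t ∈ Finset.Icc 1 T, x t) ^ ((1:ℝ)/(T:ℝ))
      = ∏ t ∈ Finset.Icc 1 T, (x t) ^ ((1:ℝ)/(T:ℝ)) :=
        (Real.finset_prod_rpow _ _ hx _).symm
  _ ≤ ∑ t ∈ Finset.Icc 1 T, (1/(T:ℝ)) * x t := h
  _ = (1/(T:ℝ)) * ∑ t ∈ Finset.Icc 1 T, x t := by rw [Finset.mul_sum]

end LO

namespace LO
variable {n : ℕ}

lemma res_diag (Lp : Matrix (Fin n) (Fin n) ℝ) (u : Fin n) : res Lp s(u,u) = 0 := by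
  have h : dvec u u = 0 := funext fun k => by simp [dvec]
  rw [res_mk, h]
  simp

/-- the purely analytic multiplicative-weights chain -/
lemma mwu_chain (T : ℕ) (hT : 1 ≤ T) (W rr Rb : ℝ) (hW : 0 < W) (hrr : 0 < rr)
    (hRb : 0 < Rb) (ρ D : ℕ → ℝ)
    (hρ : ∀ t ∈ Finset.Icc 1 T, 0 < ρ t) (hD : ∀ t ∈ Finset.Icc 1 T, 0 < D t)
    (h1 : ∏ t ∈ Finset.Icc 1 T, (W * ρ t / D t) ≤ rr)
    (h2 : Rb * ∑ t ∈ Finset.Icc 1 T, (ρ t)⁻¹ ≤ (T : ℝ)) :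
    W * Rb ≤ rr ^ ((1:ℝ)/(T:ℝ)) * ((1/(T:ℝ)) * ∑ t ∈ Finset.Icc 1 T, D t) := by
  have hT' : (T:ℝ) ≠ 0 := Nat.cast_ne_zero.2 (by omega)
  have hcard : (Finset.Icc 1 T).card = T := by rw [Nat.card_Icc]; omega
  have hP : 0 < ∏ t ∈ Finset.Icc 1 T, ρ t := Finset.prod_pos hρ
  have hQ : 0 < ∏ t ∈ Finset.Icc 1 T, D t := Finset.prod_pos hD
  have hPQ : W^T * ∏ t ∈ Finset.Icc 1 T, ρ t ≤ rr * ∏ t ∈ Finset.Icc 1 T, D t := by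
    have heq : ∏ t ∈ Finset.Icc 1 T, (W * ρ t / D t)
        = (W^T * ∏ t ∈ Finset.Icc 1 T, ρ t) / (∏ t ∈ Finset.Icc 1 T, D t) := by
      rw [Finset.prod_div_distrib, Finset.prod_mul_distrib, Finset.prod_const, hcard]
    rw [heq, div_le_iff₀ hQ] at h1
    exact h1
  have hGM : Rb ≤ (∏ t ∈ Finset.Icc 1 T, ρ t) ^ ((1:ℝ)/(T:ℝ)) := by
    have hsum : ∑ t ∈ Finset.Icc 1 T, (ρ t)⁻¹ ≤ (T:ℝ) / Rb := by
      rw [le_div_iff₀ hRb, mul_comm]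
      exact h2
    have hga := gm_le_am T hT (fun t => (ρ t)⁻¹)
      (fun t ht => (inv_pos.2 (hρ t ht)).le)
    rw [Finset.prod_inv_distrib] at hga
    have h3 : ((∏ t ∈ Finset.Icc 1 T, ρ t)⁻¹) ^ ((1:ℝ)/(T:ℝ))
        ≤ (1/(T:ℝ)) * ((T:ℝ)/Rb) :=
      le_trans hga (mul_le_mul_of_nonneg_left hsum (by positivity))
    rw [Real.inv_rpow hP.le] at h3
    have h4 : (1/(T:ℝ)) * ((T:ℝ)/Rb) = Rb⁻¹ := by field_simp
    rw [h4] at h3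
    have h5 : 0 < (∏ t ∈ Finset.Icc 1 T, ρ t) ^ ((1:ℝ)/(T:ℝ)) :=
      Real.rpow_pos_of_pos hP _
    exact (inv_le_inv₀ h5 hRb).1 h3
  have hrpow : W * (∏ t ∈ Finset.Icc 1 T, ρ t) ^ ((1:ℝ)/(T:ℝ))
      ≤ rr ^ ((1:ℝ)/(T:ℝ)) * (∏ t ∈ Finset.Icc 1 T, D t) ^ ((1:ℝ)/(T:ℝ)) := by
    have h6 := Real.rpow_le_rpow (by positivity) hPQ
      (by positivity : (0:ℝ) ≤ 1/(T:ℝ))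
    rw [Real.mul_rpow (by positivity) hP.le, Real.mul_rpow hrr.le hQ.le] at h6
    rwa [← Real.rpow_natCast W T, ← Real.rpow_mul hW.le,
      mul_one_div_cancel hT', Real.rpow_one] at h6
  have hAM : (∏ t ∈ Finset.Icc 1 T, D t) ^ ((1:ℝ)/(T:ℝ))
      ≤ (1/(T:ℝ)) * ∑ t ∈ Finset.Icc 1 T, D t :=
    gm_le_am T hT D (fun t ht => (hD t ht).le)
  calc W * Rb ≤ W * (∏ t ∈ Finset.Icc 1 T, ρ t) ^ ((1:ℝ)/(T:ℝ)) :=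
        mul_le_mul_of_nonneg_left hGM hW.le
  _ ≤ rr ^ ((1:ℝ)/(T:ℝ)) * (∏ t ∈ Finset.Icc 1 T, D t) ^ ((1:ℝ)/(T:ℝ)) := hrpow
  _ ≤ rr ^ ((1:ℝ)/(T:ℝ)) * ((1/(T:ℝ)) * ∑ t ∈ Finset.Icc 1 T, D t) :=
        mul_le_mul_of_nonneg_left hAM (Real.rpow_nonneg hrr.le _)

section Main
variable {E : Finset (Finset (Fin n))} {w : Finset (Fin n) → ℝ}
  {a : Finset (Fin n) → Fin n} {c : ℕ → Finset (Fin n) → Sym2 (Fin n) → ℝ}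
  (hcard : ∀ e ∈ E, 2 ≤ e.card) (hw : ∀ e ∈ E, 0 < w e)
  (hconn : (SimpleGraph.fromRel (fun u v : Fin n => ∃ e ∈ E, u ∈ e ∧ v ∈ e)).Connected)
  (ha : ∀ e ∈ E, a e ∈ e)
  (hc1 : ∀ e ∈ E, ∀ f ∈ star2 a e, c 1 e f = w e / ((e.card : ℝ) - 1))
  (hstep : ∀ t, 1 ≤ t → ∀ e ∈ E, ∀ f ∈ star2 a e,
      c (t + 1) e f =
        w e * (c t e f * res (pinv (lapS a E (c t))) f) /
          (∑ g ∈ star2 a e, c t e g * res (pinv (lapS a E (c t))) g))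

include hcard hw hconn ha hc1 hstep in
lemma iter_pos (hn : 0 < n) :
    ∀ t, 1 ≤ t → ∀ e ∈ E, ∀ f ∈ star2 a e, 0 < c t e f ∧ c t e f ≤ w e := by
  intro t ht
  induction t, ht using Nat.le_induction with
  | base =>
    intro e he f hf
    rw [hc1 e he f hf]
    have h2 : (2:ℝ) ≤ (e.card : ℝ) := by exact_mod_cast hcard e he
    constructor
    · apply div_pos (hw e he); linarith
    · apply div_le_self (hw e he).le; linarith
  | succ t ht ih =>
    intro e he f hf
    have hG : GoodW E a (c t) := fun e' he' f' hf' => (ih e' he' f' hf').1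
    have htermpos : ∀ g ∈ star2 a e, 0 < c t e g * res (pinv (lapS a E (c t))) g :=
      fun g hg => mul_pos (hG e he g hg) (res_pos_star hconn ha hn hG he hg)
    have hDpos : 0 < ∑ g ∈ star2 a e, c t e g * res (pinv (lapS a E (c t))) g :=
      Finset.sum_pos htermpos (star2_nonempty (ha e he) (hcard e he))
    have hfpos : 0 < c t e f * res (pinv (lapS a E (c t))) f := htermpos f hf
    rw [hstep t ht e he f hf]
    constructor
    · exact div_pos (mul_pos (hw e he) hfpos) hDpos
    · rw [div_le_iff₀ hDpos]
      refine mul_le_mul_of_nonneg_left ?_ (hw e he).le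
      exact Finset.single_le_sum (fun g hg => (htermpos g hg).le) hf

include hcard hw hconn ha hc1 hstep in
lemma star_bound (hn : 0 < n) {r : ℕ} (hr : 2 ≤ r) (hrank : E.sup Finset.card = r)
    (T : ℕ) (hT : 1 ≤ T) {e : Finset (Fin n)} (he : e ∈ E)
    {f : Sym2 (Fin n)} (hf : f ∈ star2 a e) :
    w e * res (pinv (lapS a E
        (fun e' f' => (1 / (T : ℝ)) * ∑ t ∈ Finset.Icc 1 T, c t e' f'))) f
      ≤ (r:ℝ) ^ ((1:ℝ)/(T:ℝ)) * ((1/(T:ℝ)) * ∑ t ∈ Finset.Icc 1 T,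
          ∑ g ∈ star2 a e, c t e g * res (pinv (lapS a E (c t))) g) := by
  classical
  have hpos := iter_pos hcard hw hconn ha hc1 hstep hn
  have hT' : (T:ℝ) ≠ 0 := Nat.cast_ne_zero.2 (by omega)
  have hwe := hw e he
  obtain ⟨j0, hj0e, hj0ne, rfl⟩ := star2_rep hf
  have hij : a e ≠ j0 := fun hc => hj0ne hc.symm
  have hG : ∀ t, 1 ≤ t → GoodW E a (c t) :=
    fun t ht e' he' f' hf' => (hpos t ht e' he' f' hf').1
  have hκbG : GoodW E a
      (fun e' f' => (1 / (T : ℝ)) * ∑ t ∈ Finset.Icc 1 T, c t e' f') := by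
    intro e' he' f' hf'
    have hsp : 0 < ∑ t ∈ Finset.Icc 1 T, c t e' f' :=
      Finset.sum_pos (fun t ht => (hpos t (Finset.mem_Icc.1 ht).1 e' he' f' hf').1)
        (Finset.nonempty_Icc.2 hT)
    positivity
  -- positivity of resistances and inner sums
  have hρpos : ∀ t ∈ Finset.Icc 1 T, 0 < res (pinv (lapS a E (c t))) s(a e, j0) :=
    fun t ht => res_pos hconn ha hn (hG t (Finset.mem_Icc.1 ht).1) hij
  have hDpos : ∀ t, 1 ≤ t →
      0 < ∑ g ∈ star2 a e, c t e g * res (pinv (lapS a E (c t))) g := by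
    intro t ht1
    exact Finset.sum_pos
      (fun g hg => mul_pos ((hpos t ht1 e he g hg).1)
        (res_pos_star hconn ha hn (hG t ht1) he hg))
      (star2_nonempty (ha e he) (hcard e he))
  -- (1) telescoping product bound
  have hfac : ∀ t ∈ Finset.Icc 1 T,
      w e * res (pinv (lapS a E (c t))) s(a e, j0) /
        (∑ g ∈ star2 a e, c t e g * res (pinv (lapS a E (c t))) g)
      = c (t+1) e s(a e, j0) / c t e s(a e, j0) := by
    intro t ht
    have ht1 : 1 ≤ t := (Finset.mem_Icc.1 ht).1
    have hct : 0 < c t e s(a e, j0) := (hpos t ht1 e he _ hf).1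
    have hDt := hDpos t ht1
    rw [hstep t ht1 e he _ hf]
    field_simp
  have htel : ∀ S, 1 ≤ S →
      ∏ t ∈ Finset.Icc 1 S, (c (t+1) e s(a e, j0) / c t e s(a e, j0))
        = c (S+1) e s(a e, j0) / c 1 e s(a e, j0) := by
    intro S hS
    induction S, hS using Nat.le_induction with
    | base => rw [Finset.Icc_self, Finset.prod_singleton]
    | succ S hS ihS =>
      rw [Finset.prod_Icc_succ_top (by omega), ihS]
      have h1pos : 0 < c 1 e s(a e, j0) := (hpos 1 le_rfl e he _ hf).1
      have hSpos : 0 < c (S+1) e s(a e, j0) := (hpos (S+1) (by omega) e he _ hf).1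
      field_simp
  have h1 : ∏ t ∈ Finset.Icc 1 T,
      (w e * res (pinv (lapS a E (c t))) s(a e, j0) /
        (∑ g ∈ star2 a e, c t e g * res (pinv (lapS a E (c t))) g)) ≤ (r:ℝ) := by
    rw [Finset.prod_congr rfl hfac, htel T hT]
    have hcT1 := (hpos (T+1) (by omega) e he _ hf).2
    have h2c : (2:ℝ) ≤ (e.card : ℝ) := by exact_mod_cast hcard e he
    have hc1v := hc1 e he _ hf
    have hc1pos : 0 < c 1 e s(a e, j0) := (hpos 1 le_rfl e he _ hf).1
    have hcr : (e.card : ℝ) ≤ (r:ℝ) := by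
      exact_mod_cast (hrank ▸ Finset.le_sup he : e.card ≤ r)
    rw [div_le_iff₀ hc1pos, hc1v]
    have hdp : (0:ℝ) < (e.card:ℝ) - 1 := by linarith
    have key : ((e.card:ℝ) - 1) * (w e / ((e.card:ℝ) - 1)) = w e := by field_simp
    have h7 : ((e.card:ℝ) - 1) * (w e / ((e.card:ℝ) - 1))
        ≤ (r:ℝ) * (w e / ((e.card:ℝ) - 1)) :=
      mul_le_mul_of_nonneg_right (by linarith) (by positivity)
    linarith
  -- (2) concavity bound
  set Lb := lapS a E (fun e' f' => (1 / (T : ℝ)) * ∑ t ∈ Finset.Icc 1 T, c t e' f')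
    with hLb_def
  have hRbpos : 0 < res (pinv Lb) s(a e, j0) := res_pos hconn ha hn hκbG hij
  set Rb := res (pinv Lb) s(a e, j0) with hRb_def
  set xx := pinv Lb *ᵥ dvec (a e) j0 with hxx_def
  have hLx : Lb *ᵥ xx = dvec (a e) j0 := lap_pinv_dvec hconn ha hn hκbG _ _
  have hd : dvec (a e) j0 ⬝ᵥ xx = Rb := by rw [hRb_def, res_mk, hxx_def]
  have hQb : xx ⬝ᵥ (Lb *ᵥ xx) = Rb := by rw [hLx, dotProduct_comm, hd]
  have hswap : xx ⬝ᵥ (Lb *ᵥ xx)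
      = (1/(T:ℝ)) * ∑ t ∈ Finset.Icc 1 T, (xx ⬝ᵥ (lapS a E (c t) *ᵥ xx)) := by
    rw [hLb_def, lapS_qf]
    calc ∑ e' ∈ E, ∑ f' ∈ star2 a e',
          ((1 / (T : ℝ)) * ∑ t ∈ Finset.Icc 1 T, c t e' f') * qsym xx f'
        = ∑ e' ∈ E, ∑ f' ∈ star2 a e', (1/(T:ℝ)) *
            ∑ t ∈ Finset.Icc 1 T, (c t e' f' * qsym xx f') := by
          refine Finset.sum_congr rfl fun e' _ => Finset.sum_congr rfl fun f' _ => ?_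
          rw [mul_assoc, Finset.sum_mul]
    _ = (1/(T:ℝ)) * ∑ e' ∈ E, ∑ f' ∈ star2 a e',
            ∑ t ∈ Finset.Icc 1 T, (c t e' f' * qsym xx f') := by
          rw [Finset.mul_sum]
          refine Finset.sum_congr rfl fun e' _ => ?_
          rw [Finset.mul_sum]
    _ = (1/(T:ℝ)) * ∑ t ∈ Finset.Icc 1 T, ∑ e' ∈ E,
            ∑ f' ∈ star2 a e', (c t e' f' * qsym xx f') := by
          congr 1
          rw [Finset.sum_comm]
          refine Finset.sum_congr rfl fun t _ => ?_
          rw [Finset.sum_comm]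
    _ = (1/(T:ℝ)) * ∑ t ∈ Finset.Icc 1 T, (xx ⬝ᵥ (lapS a E (c t) *ᵥ xx)) := by
          congr 1
          exact Finset.sum_congr rfl fun t _ => (lapS_qf a E (c t) xx).symm
  have hsum_qf : ∑ t ∈ Finset.Icc 1 T, (xx ⬝ᵥ (lapS a E (c t) *ᵥ xx)) = (T:ℝ) * Rb := by
    have hcomb : (1/(T:ℝ)) * ∑ t ∈ Finset.Icc 1 T, (xx ⬝ᵥ (lapS a E (c t) *ᵥ xx)) = Rb := by
      rw [← hswap, hQb]
    field_simp at hcomb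
    linarith
  have hper : ∀ t ∈ Finset.Icc 1 T,
      Rb^2 * (res (pinv (lapS a E (c t))) s(a e, j0))⁻¹ ≤ xx ⬝ᵥ (lapS a E (c t) *ᵥ xx) := by
    intro t ht
    have ht1 : 1 ≤ t := (Finset.mem_Icc.1 ht).1
    have hel := energy_lower hconn ha hn (hG t ht1) (a e) j0 xx
    rw [hd] at hel
    rw [← div_eq_mul_inv, div_le_iff₀ (hρpos t ht)]
    exact hel
  have h2 : Rb * ∑ t ∈ Finset.Icc 1 T,
      (res (pinv (lapS a E (c t))) s(a e, j0))⁻¹ ≤ (T:ℝ) := by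
    have hs := Finset.sum_le_sum hper
    rw [← Finset.mul_sum, hsum_qf] at hs
    have hscalc : (Rb * ∑ t ∈ Finset.Icc 1 T,
        (res (pinv (lapS a E (c t))) s(a e, j0))⁻¹) * Rb
        = Rb^2 * ∑ t ∈ Finset.Icc 1 T, (res (pinv (lapS a E (c t))) s(a e, j0))⁻¹ := by
      ring
    have := (mul_le_mul_iff_of_pos_right hRbpos).1 (by rw [hscalc]; linarith [hs] :
      (Rb * ∑ t ∈ Finset.Icc 1 T, (res (pinv (lapS a E (c t))) s(a e, j0))⁻¹) * Rb
        ≤ (T:ℝ) * Rb)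
    exact this
  -- (3) chain
  have hrpos : (0:ℝ) < (r:ℝ) := by exact_mod_cast (by omega : 0 < r)
  have hmain := mwu_chain T hT (w e) (r:ℝ) Rb hwe hrpos hRbpos
    (fun t => res (pinv (lapS a E (c t))) s(a e, j0))
    (fun t => ∑ g ∈ star2 a e, c t e g * res (pinv (lapS a E (c t))) g)
    hρpos (fun t ht => hDpos t (Finset.mem_Icc.1 ht).1) h1 h2
  exact hmain

end Main
end LO


/-- **Correctness of the multiplicative-weights iteration for leverage score
overestimates (exact-arithmetic version).**  For a connected weighted hypergraph with
positive weights, fixed star centers `a_e ∈ e`, initial weights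
`c^{(1)}_{e,f} = w_e/(|e|-1)` and iteration
`c^{(t+1)}_{e,f} = w_e·c^{(t)}_{e,f}R_f(c^{(t)})/(Σ_{g∈S_e} c^{(t)}_{e,g}R_g(c^{(t)}))`:
(a) `0 < c^{(t)}_{e,f} ≤ w_e` for all `t ≥ 1`; and (b) for every `T ≥ 1`, with
`c̄ = (1/T)Σ_{t=1}^T c^{(t)}` and `z` as in `zval`, one has
`Σ_e z_e ≤ 2·r^{1/T}·n` and `z_e ≥ w_e·max_{{u,v}⊆e} R_{uv}(c̄)` for every `e ∈ E`. -/
theorem leverage_overestimate_iteration (n : ℕ) (E : Finset (Finset (Fin n)))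
    (w : Finset (Fin n) → ℝ)
    (hcard : ∀ e ∈ E, 2 ≤ e.card) (hw : ∀ e ∈ E, 0 < w e)
    (r : ℕ) (hr : 2 ≤ r) (hrank : E.sup Finset.card = r)
    (hconn : (SimpleGraph.fromRel
      (fun u v : Fin n => ∃ e ∈ E, u ∈ e ∧ v ∈ e)).Connected)
    (a : Finset (Fin n) → Fin n) (ha : ∀ e ∈ E, a e ∈ e)
    (c : ℕ → Finset (Fin n) → Sym2 (Fin n) → ℝ)
    (hc1 : ∀ e ∈ E, ∀ f ∈ star2 a e, c 1 e f = w e / ((e.card : ℝ) - 1))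
    (hstep : ∀ t, 1 ≤ t → ∀ e ∈ E, ∀ f ∈ star2 a e,
      c (t + 1) e f =
        w e * (c t e f * res (pinv (lapS a E (c t))) f) /
          (∑ g ∈ star2 a e, c t e g * res (pinv (lapS a E (c t))) g)) :
    (∀ t, 1 ≤ t → ∀ e ∈ E, ∀ f ∈ star2 a e, 0 < c t e f ∧ c t e f ≤ w e) ∧
    (∀ T : ℕ, 1 ≤ T →
      (∑ e ∈ E, zval a E c r T e) ≤ 2 * (r : ℝ) ^ ((1 : ℝ) / (T : ℝ)) * n ∧
      ∀ e ∈ E, ∀ u ∈ e, ∀ v ∈ e,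
        w e * res (pinv (lapS a E
            (fun e' f' => (1 / (T : ℝ)) * ∑ t ∈ Finset.Icc 1 T, c t e' f'))) s(u, v)
          ≤ zval a E c r T e) := by
  have hn : 0 < n := Fin.pos_iff_nonempty.2 hconn.nonempty
  have hpos := LO.iter_pos hcard hw hconn ha hc1 hstep hn
  refine ⟨hpos, fun T hT => ?_⟩
  have hT' : (T:ℝ) ≠ 0 := Nat.cast_ne_zero.2 (by omega)
  have hTpos : (0:ℝ) < (T:ℝ) := by
    have : 0 < T := by omega
    exact_mod_cast this
  have hG : ∀ t, 1 ≤ t → LO.GoodW E a (c t) :=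
    fun t ht e' he' f' hf' => (hpos t ht e' he' f' hf').1
  have hrp : (0:ℝ) < (r:ℝ) ^ ((1:ℝ)/(T:ℝ)) :=
    Real.rpow_pos_of_pos (by exact_mod_cast (by omega : 0 < r)) _
  have hterm_nonneg : ∀ e ∈ E, ∀ t ∈ Finset.Icc 1 T, ∀ g ∈ star2 a e,
      0 ≤ c t e g * res (pinv (lapS a E (c t))) g := by
    intro e he t ht g hg
    have ht1 : 1 ≤ t := (Finset.mem_Icc.1 ht).1
    exact (mul_pos ((hpos t ht1 e he g hg).1)
      (LO.res_pos_star hconn ha hn (hG t ht1) he hg)).le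
  have hS_nonneg : ∀ e ∈ E, 0 ≤ ∑ t ∈ Finset.Icc 1 T,
      ∑ g ∈ star2 a e, c t e g * res (pinv (lapS a E (c t))) g := by
    intro e he
    exact Finset.sum_nonneg fun t ht => Finset.sum_nonneg fun g hg =>
      hterm_nonneg e he t ht g hg
  constructor
  · -- (b1) total overestimate bound
    have hfost : ∀ t ∈ Finset.Icc 1 T,
        ∑ e ∈ E, ∑ g ∈ star2 a e, c t e g * res (pinv (lapS a E (c t))) g
          = (n:ℝ) - 1 :=
      fun t ht => LO.foster hconn ha hn (hG t (Finset.mem_Icc.1 ht).1)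
    have hn1 : (1:ℝ) ≤ (n:ℝ) := by exact_mod_cast hn
    calc ∑ e ∈ E, zval a E c r T e
        = 2 * (r:ℝ)^((1:ℝ)/(T:ℝ)) * ((1:ℝ)/(T:ℝ)) *
            ∑ e ∈ E, ∑ t ∈ Finset.Icc 1 T,
              ∑ g ∈ star2 a e, c t e g * res (pinv (lapS a E (c t))) g := by
          simp only [zval]
          rw [← Finset.mul_sum]
    _ = 2 * (r:ℝ)^((1:ℝ)/(T:ℝ)) * ((1:ℝ)/(T:ℝ)) *
            ∑ t ∈ Finset.Icc 1 T, ((n:ℝ) - 1) := by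
          rw [Finset.sum_comm, Finset.sum_congr rfl hfost]
    _ = 2 * (r:ℝ)^((1:ℝ)/(T:ℝ)) * ((1:ℝ)/(T:ℝ)) * ((T:ℝ) * ((n:ℝ)-1)) := by
          rw [Finset.sum_const, Nat.card_Icc, nsmul_eq_mul]
          norm_num
    _ = 2 * (r:ℝ)^((1:ℝ)/(T:ℝ)) * ((n:ℝ)-1) := by
          field_simp
    _ ≤ 2 * (r:ℝ)^((1:ℝ)/(T:ℝ)) * (n:ℝ) := by nlinarith [hrp]
  · -- (b2) per-edge overestimate property
    intro e he u hu v hv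
    have hκbG : LO.GoodW E a
        (fun e' f' => (1 / (T : ℝ)) * ∑ t ∈ Finset.Icc 1 T, c t e' f') := by
      intro e' he' f' hf'
      have hsp : 0 < ∑ t ∈ Finset.Icc 1 T, c t e' f' :=
        Finset.sum_pos (fun t ht => (hpos t (Finset.mem_Icc.1 ht).1 e' he' f' hf').1)
          (Finset.nonempty_Icc.2 hT)
      positivity
    have hkey : ∀ f ∈ star2 a e,
        w e * res (pinv (lapS a E
          (fun e' f' => (1 / (T : ℝ)) * ∑ t ∈ Finset.Icc 1 T, c t e' f'))) f
        ≤ (r:ℝ) ^ ((1:ℝ)/(T:ℝ)) * ((1/(T:ℝ)) * ∑ t ∈ Finset.Icc 1 T,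
            ∑ g ∈ star2 a e, c t e g * res (pinv (lapS a E (c t))) g) :=
      fun f hf => LO.star_bound hcard hw hconn ha hc1 hstep hn hr hrank T hT he hf
    have hhalf : (r:ℝ) ^ ((1:ℝ)/(T:ℝ)) * ((1/(T:ℝ)) * ∑ t ∈ Finset.Icc 1 T,
          ∑ g ∈ star2 a e, c t e g * res (pinv (lapS a E (c t))) g)
        ≤ zval a E c r T e := by
      simp only [zval]
      have hSn := hS_nonneg e he
      have h8 : 0 ≤ (r:ℝ) ^ ((1:ℝ)/(T:ℝ)) * ((1/(T:ℝ)) *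
          ∑ t ∈ Finset.Icc 1 T, ∑ g ∈ star2 a e,
            c t e g * res (pinv (lapS a E (c t))) g) := by positivity
      nlinarith [h8]
    have hzn : 0 ≤ zval a E c r T e := by
      simp only [zval]
      have hSn := hS_nonneg e he
      positivity
    by_cases huv : u = v
    · subst huv
      rw [LO.res_diag, mul_zero]
      exact hzn
    · by_cases hua : u = a e
      · have hva : v ≠ a e := fun hc => huv (hua.trans hc.symm)
        have hf : s(u,v) ∈ star2 a e := by
          rw [hua]
          exact LO.star2_mem_mk (ha e he) hv hva
        exact le_trans (hkey _ hf) hhalf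
      · by_cases hva : v = a e
        · have hf : s(u,v) ∈ star2 a e := by
            rw [hva, Sym2.eq_swap]
            exact LO.star2_mem_mk (ha e he) hu hua
          exact le_trans (hkey _ hf) hhalf
        · have htri := LO.res_triangle hconn ha hn hκbG (u := u) (v := v) (b := a e)
            hua (fun hc => hva hc.symm)
          have hf1 : s(u, a e) ∈ star2 a e := by
            rw [Sym2.eq_swap]
            exact LO.star2_mem_mk (ha e he) hu hua
          have hf2 : s(a e, v) ∈ star2 a e :=
            LO.star2_mem_mk (ha e he) hv hva
          have hb1 := hkey _ hf1
          have hb2 := hkey _ hf2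
          have hwle := (hw e he).le
          have hcomb : w e * res (pinv (lapS a E
              (fun e' f' => (1 / (T : ℝ)) * ∑ t ∈ Finset.Icc 1 T, c t e' f'))) s(u,v)
              ≤ 2 * ((r:ℝ) ^ ((1:ℝ)/(T:ℝ)) * ((1/(T:ℝ)) * ∑ t ∈ Finset.Icc 1 T,
                ∑ g ∈ star2 a e, c t e g * res (pinv (lapS a E (c t))) g)) := by
            have := mul_le_mul_of_nonneg_left htri hwle
            rw [mul_add] at this
            linarith
          refine le_trans hcomb ?_
          simp only [zval]
          ring_nf
          exact le_refl _
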